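/- Let V_a be the simple graph on vertex set {1,2,...,12} whose edges are those of the basic block B on {1,...,7} (edge set {12,14,15,17,23,24,25,26,27,34,35,45,46,47,67}) together with the edges {1,8},{1,9},{7,10},{7,11},{10,11},{10,12},{11,12}. Then a 2-coloring c of V_a with c(1) = gray is a legal 2-coloring of V_a if and only if its gray class is exactly {1,3,5,6,7,12}. In particular, assuming vertex 1 is gray, V_a has a unique legal 2-coloring; in it the two vertices 8 and 9 (labeled a) have the same color (white), the vertex 12 (labeled ā) has the other color (gray), and each of 8, 9, 12 has a color different from all of its neighbors in V_a. -/

import Mathlib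

/-- A set `U` of vertices of a simple graph `G` induces a linear forest:
the induced subgraph is acyclic and every vertex of `U` has at most 2 neighbors in `U`. -/
def InducesLinearForest {V : Type*} (G : SimpleGraph V) (U : Set V) : Prop :=
  (G.induce U).IsAcyclic ∧ ∀ v ∈ U, {w | w ∈ U ∧ G.Adj v w}.ncard ≤ 2

/-- A legal 2-coloring of `G` (`true` = gray, `false` = white): each color class
induces a linear forest. -/
def IsLegal2Coloring {V : Type*} (G : SimpleGraph V) (c : V → Bool) : Prop :=
  InducesLinearForest G {v | c v = true} ∧ InducesLinearForest G {v | c v = false}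

/-- The edge set of the basic building block `B`. -/
def BEdges : Set (ℕ × ℕ) :=
  {(1,2),(1,4),(1,5),(1,7),(2,3),(2,4),(2,5),(2,6),(2,7),
   (3,4),(3,5),(4,5),(4,6),(4,7),(6,7)}

/-- Vertex set {1, …, 12}. -/
abbrev V12 : Type := {m : ℕ // m ∈ Finset.Icc 1 12}

/-- The edge set of the variable gadget `V_a`: the block `B` together with pendant
vertices 8, 9 at vertex 1, adjacent vertices 10, 11 at vertex 7, and vertex 12
adjacent to both 10 and 11. -/
def VaEdges : Set (ℕ × ℕ) :=
  BEdges ∪ {(1,8),(1,9),(7,10),(7,11),(10,11),(10,12),(11,12)}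

/-- The variable gadget `V_a` on vertex set {1, …, 12}. -/
def VaGraph : SimpleGraph V12 :=
  SimpleGraph.fromRel (fun u v => (u.val, v.val) ∈ VaEdges)

/-!
The block contains the four cliques {1,2,4,5}, {2,3,4,5}, {1,2,4,7}, {2,4,6,7}. A legal coloring
has no monochromatic triangle, so each of these K₄'s is split 2 + 2, and two vertices completing
the same triangle to a K₄ get the same color: hence 3 and 6 share the color of 1, and 5 and 7
share a color. If 5 were white, the triangle 2,4,5 would make 2 or 4 gray, giving it the three
gray neighbours 1, 3, 6. So 5 and 7 are gray, which forces 2, 4 (triangles), 8, 9, 10, 11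
(degree at most 2 inside a class) white and then 12 gray (triangle 10,11,12). Conversely the
two classes of this coloring are disjoint unions of paths.
-/

open SimpleGraph

theorem SimpleGraph.isAcyclic_hasse {α : Type*} [LinearOrder α] : (hasse α).IsAcyclic := by
  refine isAcyclic_iff_forall_adj_isBridge.2 fun a b hab => ?_
  wlog hcov : a ⋖ b generalizing a b
  · rw [Sym2.eq_swap]
    exact this b a hab.symm ((hasse_adj.1 hab).resolve_left hcov)
  rintro ⟨p⟩
  obtain ⟨d, -, hfst, hsnd⟩ := p.exists_boundary_dart {x | x ≤ a} le_rfl (not_le.2 hcov.lt)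
  obtain ⟨hd, hne⟩ := (deleteEdges_adj ..).1 d.adj
  simp only [Set.mem_ofPred_eq, not_le] at hfst hsnd
  have hdcov : d.fst ⋖ d.snd :=
    (hasse_adj.1 hd).resolve_right fun h => (hfst.trans_lt hsnd).asymm h.lt
  have hfst_eq : d.fst = a := hfst.antisymm (not_lt.1 fun h => hdcov.2 h hsnd)
  have hsnd_eq : d.snd = b := (hfst_eq ▸ hdcov).unique_right hcov
  exact hne (by rw [hfst_eq, hsnd_eq]; rfl)

section
variable {V : Type*} {G : SimpleGraph V} {U : Set V} {c : V → Bool}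

theorem InducesLinearForest.not_triangle (hU : InducesLinearForest G U) {a b d : V}
    (ha : a ∈ U) (hb : b ∈ U) (hd : d ∈ U) (hab : G.Adj a b) (had : G.Adj a d)
    (hbd : G.Adj b d) : False := by
  classical
  exact hU.1.cliqueFree le_rfl {⟨a, ha⟩, ⟨b, hb⟩, ⟨d, hd⟩}
    (is3Clique_triple_iff.2 ⟨by exact hab, by exact had, by exact hbd⟩)

theorem InducesLinearForest.not_three_adj [Finite V] (hU : InducesLinearForest G U) {v x y z : V}
    (hv : v ∈ U) (hx : x ∈ U) (hy : y ∈ U) (hz : z ∈ U)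
    (hvx : G.Adj v x) (hvy : G.Adj v y) (hvz : G.Adj v z)
    (hxy : x ≠ y) (hxz : x ≠ z) (hyz : y ≠ z) : False := by
  have hsub : ({x, y, z} : Set V) ⊆ {w | w ∈ U ∧ G.Adj v w} := by
    rintro w (rfl | rfl | rfl) <;> simp_all
  have := (Set.ncard_le_ncard hsub).trans (hU.2 v hv)
  rw [Set.ncard_eq_three.2 ⟨x, y, z, hxy, hxz, hyz, rfl⟩] at this
  omega

theorem inducesLinearForest_of_injOn (f : V → ℕ) (hf : U.InjOn f)
    (hadj : ∀ u ∈ U, ∀ v ∈ U, G.Adj u v → f u + 1 = f v ∨ f v + 1 = f u) :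
    InducesLinearForest G U := by
  refine ⟨isAcyclic_hasse.comap ⟨fun v => f v, fun {a b} h => ?_⟩ ?_, fun v hv => ?_⟩
  · rw [hasse_adj, Nat.covBy_iff_add_one_eq, Nat.covBy_iff_add_one_eq]
    exact hadj a a.2 b b.2 h
  · exact fun a b h => Subtype.ext (hf a.2 b.2 h)
  · calc {w | w ∈ U ∧ G.Adj v w}.ncard ≤ ({f v + 1, f v - 1} : Set ℕ).ncard :=
          Set.ncard_le_ncard_of_injOn f (fun w ⟨hw, hvw⟩ => by
            rcases hadj v hv w hw hvw with h | h <;> simp only [Set.mem_insert_iff,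
              Set.mem_singleton_iff] <;> omega) (hf.mono fun w hw => hw.1) (Set.toFinite _)
      _ ≤ 2 := (Set.ncard_insert_le _ _).trans (by rw [Set.ncard_singleton])

theorem IsLegal2Coloring.inducesLinearForest (hc : IsLegal2Coloring G c) (k : Bool) :
    InducesLinearForest G {v | c v = k} := by
  cases k
  exacts [hc.2, hc.1]

theorem IsLegal2Coloring.not_monochromatic_triangle (hc : IsLegal2Coloring G c) {a b d : V}
    {k : Bool} (hab : G.Adj a b) (had : G.Adj a d) (hbd : G.Adj b d)
    (ha : c a = k) (hb : c b = k) (hd : c d = k) : False :=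
  (hc.inducesLinearForest k).not_triangle ha hb hd hab had hbd

theorem IsLegal2Coloring.not_three_adj_same_color [Finite V] (hc : IsLegal2Coloring G c)
    {v x y z : V} {k : Bool} (hvx : G.Adj v x) (hvy : G.Adj v y) (hvz : G.Adj v z)
    (hxy : x ≠ y) (hxz : x ≠ z) (hyz : y ≠ z)
    (hv : c v = k) (hx : c x = k) (hy : c y = k) (hz : c z = k) : False :=
  (hc.inducesLinearForest k).not_three_adj hv hx hy hz hvx hvy hvz hxy hxz hyz

theorem IsLegal2Coloring.eq_of_adj_triangle (hc : IsLegal2Coloring G c) {x y z u w : V}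
    (hxy : G.Adj x y) (hxz : G.Adj x z) (hyz : G.Adj y z)
    (hux : G.Adj u x) (huy : G.Adj u y) (huz : G.Adj u z)
    (hwx : G.Adj w x) (hwy : G.Adj w y) (hwz : G.Adj w z) : c u = c w := by
  -- the triangle `xyz` is colored 2 + 1, and `u`, `w` must both take the minority color
  have mono := fun {a b d : V} (hab : G.Adj a b) (had : G.Adj a d) (hbd : G.Adj b d) =>
    fun k => hc.not_monochromatic_triangle (k := k) hab had hbd
  have := mono hxy hxz hyz
  have := mono hux huy hxy
  have := mono hux huz hxz
  have := mono huy huz hyz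
  have := mono hwx hwy hxy
  have := mono hwx hwz hxz
  have := mono hwy hwz hyz
  generalize c x = p, c y = q, c z = r, c u = s, c w = t at *
  cases p <;> cases q <;> cases r <;> cases s <;> cases t <;> simp_all

end

def vtx (n : ℕ) (h : n ∈ Finset.Icc 1 12 := by decide) : V12 := ⟨n, h⟩

instance : DecidablePred (· ∈ VaEdges) := fun _ => by delta VaEdges BEdges; infer_instance

instance : DecidableRel VaGraph.Adj := fun _ _ => by delta VaGraph; infer_instance

def grayColoring (v : V12) : Bool := v.val ∈ ({1, 3, 5, 6, 7, 12} : Finset ℕ)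

/- The gray class is the path 3-5-1-7-6 plus the vertex 12, the white class the paths 2-4 and
10-11 plus 8 and 9; listing each class along its paths gives the labels. -/
theorem isLegal2Coloring_grayColoring : IsLegal2Coloring VaGraph grayColoring :=
  ⟨inducesLinearForest_of_injOn (fun v => [3, 5, 1, 7, 6, 12].idxOf v.val)
      (by unfold Set.InjOn; decide) (by decide),
    inducesLinearForest_of_injOn (fun v => [2, 4, 10, 11, 8, 9].idxOf v.val)
      (by unfold Set.InjOn; decide) (by decide)⟩

theorem IsLegal2Coloring.eq_grayColoring {c : V12 → Bool} (hc : IsLegal2Coloring VaGraph c)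
    (h1 : c (vtx 1) = true) : c = grayColoring := by
  have h3 : c (vtx 3) = true := Eq.trans (by
    apply hc.eq_of_adj_triangle (x := vtx 2) (y := vtx 4) (z := vtx 5) <;> decide) h1
  have h6 : c (vtx 6) = true := Eq.trans (by
    apply hc.eq_of_adj_triangle (x := vtx 2) (y := vtx 4) (z := vtx 7) <;> decide) h1
  have h57 : c (vtx 5) = c (vtx 7) := by
    apply hc.eq_of_adj_triangle (x := vtx 1) (y := vtx 2) (z := vtx 4) <;> decide
  have h5 : c (vtx 5) = true := by
    rw [← Bool.not_eq_false]
    intro h5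
    cases h2 : c (vtx 2)
    · cases h4 : c (vtx 4)
      · exact hc.not_monochromatic_triangle (by decide) (by decide) (by decide) h2 h4 h5
      · exact hc.not_three_adj_same_color (by decide) (by decide) (by decide) (by decide)
          (by decide) (by decide) h4 h1 h3 h6
    · exact hc.not_three_adj_same_color (by decide) (by decide) (by decide) (by decide)
        (by decide) (by decide) h2 h1 h3 h6
  have h7 : c (vtx 7) = true := h57 ▸ h5
  have h2 : c (vtx 2) = false := Bool.eq_false_iff.2 fun h2 =>
    hc.not_monochromatic_triangle (by decide) (by decide) (by decide) h1 h2 h5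
  have h4 : c (vtx 4) = false := Bool.eq_false_iff.2 fun h4 =>
    hc.not_monochromatic_triangle (by decide) (by decide) (by decide) h1 h4 h5
  have h8 : c (vtx 8) = false := Bool.eq_false_iff.2 fun h8 =>
    hc.not_three_adj_same_color (by decide) (by decide) (by decide) (by decide) (by decide)
      (by decide) h1 h5 h7 h8
  have h9 : c (vtx 9) = false := Bool.eq_false_iff.2 fun h9 =>
    hc.not_three_adj_same_color (by decide) (by decide) (by decide) (by decide) (by decide)
      (by decide) h1 h5 h7 h9
  have h10 : c (vtx 10) = false := Bool.eq_false_iff.2 fun h10 =>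
    hc.not_three_adj_same_color (by decide) (by decide) (by decide) (by decide) (by decide)
      (by decide) h7 h1 h6 h10
  have h11 : c (vtx 11) = false := Bool.eq_false_iff.2 fun h11 =>
    hc.not_three_adj_same_color (by decide) (by decide) (by decide) (by decide) (by decide)
      (by decide) h7 h1 h6 h11
  have h12 : c (vtx 12) = true := by
    rw [← Bool.not_eq_false]
    exact hc.not_monochromatic_triangle (by decide) (by decide) (by decide) h10 h11
  funext v
  fin_cases v
  all_goals assumption

/-- A 2-coloring `c` of `V_a` with `c 1 = gray` is legal iff its gray class is
exactly {1,3,5,6,7,12}.  In particular, in the unique such legal coloring the two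
vertices 8 and 9 are both white, vertex 12 is gray, and each of 8, 9, 12 has a
color different from all of its neighbors in `V_a`. -/
theorem stmt1 (c : V12 → Bool) (h1 : c ⟨1, by decide⟩ = true) :
    (IsLegal2Coloring VaGraph c ↔
      {v : V12 | c v = true} = {v : V12 | v.val ∈ ({1,3,5,6,7,12} : Set ℕ)}) ∧
    (IsLegal2Coloring VaGraph c →
      c ⟨8, by decide⟩ = c ⟨9, by decide⟩ ∧
      c ⟨8, by decide⟩ = false ∧
      c ⟨12, by decide⟩ ≠ c ⟨8, by decide⟩ ∧
      (∀ w, VaGraph.Adj ⟨8, by decide⟩ w → c w ≠ c ⟨8, by decide⟩) ∧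
      (∀ w, VaGraph.Adj ⟨9, by decide⟩ w → c w ≠ c ⟨9, by decide⟩) ∧
      (∀ w, VaGraph.Adj ⟨12, by decide⟩ w → c w ≠ c ⟨12, by decide⟩)) := by
  have hlegal : IsLegal2Coloring VaGraph c ↔ c = grayColoring :=
    ⟨fun hc => hc.eq_grayColoring h1, fun h => h ▸ isLegal2Coloring_grayColoring⟩
  have hgray : {v | grayColoring v = true} = {v : V12 | v.val ∈ ({1,3,5,6,7,12} : Set ℕ)} := by
    ext v
    simp [grayColoring]
  refine ⟨hlegal.trans ⟨fun h => h ▸ hgray, fun h => funext fun v => ?_⟩, fun hc => ?_⟩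
  · exact Bool.eq_iff_iff.2 (Set.ext_iff.1 (h.trans hgray.symm) v)
  · obtain rfl := hlegal.1 hc
    decide
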